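/- Fix integers 1 ≤ m ≤ n. For subsets A, B ⊆ {2,…,n} of cardinality m−1, with A = {a₁<…<a_{m−1}}, B = {b₁<…<b_{m−1}}, define A∧B = {min(a_i,b_i)}, A∨B = {max(a_i,b_i)}, and β_A as the product of variables x_{i,j} over (i,j) ∈ V∖D_A. Then β_A · β_B = β_{A∧B} · β_{A∨B}. -/

import Mathlib

open MvPolynomial Finset

/-- The set `V = {(i,j) ∈ [m]×[n] : m−i < j ≤ n−i+1}` (1-based indices). -/
def Vset (m n : ℕ) : Finset (ℕ × ℕ) :=
  ((Finset.Icc 1 m) ×ˢ (Finset.Icc 1 n)).filter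
    (fun p => m - p.1 < p.2 ∧ p.2 ≤ n - p.1 + 1)

/-- `a : ℕ → ℕ` represents an `(m−1)`-element subset `A = {a 1 < … < a (m−1)} ⊆ {2,…,n}`,
together with the conventions `a 0 = 1` and `a m = n + 1`. -/
def SubsetRep (m n : ℕ) (a : ℕ → ℕ) : Prop :=
  a 0 = 1 ∧ a m = n + 1 ∧ ∀ i < m, a i < a (i + 1)

/-- The region `D_A = {(i,j) ∈ V : a_{m−i} ≤ j < a_{m−i+1}}`. -/
def Dset (m n : ℕ) (a : ℕ → ℕ) : Finset (ℕ × ℕ) :=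
  (Vset m n).filter (fun p => a (m - p.1) ≤ p.2 ∧ p.2 < a (m - p.1 + 1))

variable (K : Type*) [Field K]

/-- The squarefree monomial `β_A = ∏_{(i,j) ∈ V ∖ D_A} x_{i,j}`. -/
noncomputable def betaM (m n : ℕ) (a : ℕ → ℕ) : MvPolynomial (ℕ × ℕ) K :=
  ∏ p ∈ Vset m n \ Dset m n a, X p

/-- The antidiagonal monomial `α_j = ∏_{i=1}^m x_{m−i+1, j+i−1}`. -/
noncomputable def alphaM (m : ℕ) (j : ℕ) : MvPolynomial (ℕ × ℕ) K :=
  ∏ i ∈ Finset.Icc 1 m, X (m - i + 1, j + i - 1)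

/-- The ideal `N` generated by the monomials `β_A` for all `(m−1)`-element subsets
`A ⊆ {2,…,n}`. -/
noncomputable def Nideal (m n : ℕ) : Ideal (MvPolynomial (ℕ × ℕ) K) :=
  Ideal.span { f | ∃ a : ℕ → ℕ, SubsetRep m n a ∧ f = betaM K m n a }

/-- `A k`, `1 ≤ k ≤ s`, is a chain `A₁ ≤ … ≤ A_s` of `(m−1)`-element subsets of `{2,…,n}`,
where `≤` is the componentwise partial order. -/
def BetaChain (m n s : ℕ) (A : ℕ → ℕ → ℕ) : Prop :=
  (∀ k, 1 ≤ k → k ≤ s → SubsetRep m n (A k)) ∧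
    (∀ k, 1 ≤ k → k + 1 ≤ s → ∀ i ≤ m, A k i ≤ A (k + 1) i)

/-- `W^{[2]}` : the ideal generated by the squares of all the monomials in `W`. -/
noncomputable def bracketTwo {σ : Type*} (W : Ideal (MvPolynomial σ K)) :
    Ideal (MvPolynomial σ K) :=
  Ideal.span { g | ∃ d : σ →₀ ℕ, (monomial d (1 : K)) ∈ W ∧ g = (monomial d (1 : K)) ^ 2 }

/-- The symbolic power `I^{(n)} = ⋂_{p ∈ Min(I)} (pⁿ R_p ∩ R)`. -/
noncomputable def symbolicPower {R : Type*} [CommRing R] (I : Ideal R) (n : ℕ) : Ideal R :=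
  ⨅ p : {q : Ideal R // q ∈ I.minimalPrimes},
    letI : p.1.IsPrime := p.2.1.1
    ((p.1 ^ n).map (algebraMap R (Localization.AtPrime p.1))).comap
      (algebraMap R (Localization.AtPrime p.1))

/-! Row `i` of `D_A` is the nonempty interval `a_{m−i} ≤ j < a_{m−i+1}`, so the exponent of
`x_{i,j}` in `β_A β_B` is `2` minus the number of the two intervals `[a_{m−i}, a_{m−i+1})`,
`[b_{m−i}, b_{m−i+1})` containing `j`. Taking endpoints componentwise min and max does not change
that number, provided both intervals are nonempty. -/

lemma ite_Ico_mul_ite_Ico {M : Type*} [CommMonoid M] (x : M) {a₁ a₂ b₁ b₂ : ℕ} (j : ℕ)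
    (ha : a₁ < a₂) (hb : b₁ < b₂) :
    (if a₁ ≤ j ∧ j < a₂ then (1 : M) else x) * (if b₁ ≤ j ∧ j < b₂ then 1 else x) =
      (if min a₁ b₁ ≤ j ∧ j < min a₂ b₂ then 1 else x) *
        (if max a₁ b₁ ≤ j ∧ j < max a₂ b₂ then 1 else x) := by
  split_ifs <;> first | rfl | exact mul_comm _ _ | (exfalso; omega)

lemma betaM_eq_prod_Vset (m n : ℕ) (a : ℕ → ℕ) :
    betaM K m n a = ∏ p ∈ Vset m n,
      if a (m - p.1) ≤ p.2 ∧ p.2 < a (m - p.1 + 1) then 1 else X p := by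
  rw [betaM, Dset, ← filter_not, prod_filter]
  exact prod_congr rfl fun p _ => by split_ifs <;> tauto

lemma sub_fst_lt_of_mem_Vset {m n : ℕ} {p : ℕ × ℕ} (hp : p ∈ Vset m n) : m - p.1 < m := by
  simp only [Vset, mem_filter, mem_product, mem_Icc] at hp
  omega

theorem stmt_4 (m n : ℕ) (a b : ℕ → ℕ) (ha : SubsetRep m n a) (hb : SubsetRep m n b) :
    betaM K m n a * betaM K m n b =
      betaM K m n (fun i => min (a i) (b i)) * betaM K m n (fun i => max (a i) (b i)) := by
  simp only [betaM_eq_prod_Vset, ← prod_mul_distrib]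
  refine prod_congr rfl fun p hp => ?_
  have hrow := sub_fst_lt_of_mem_Vset hp
  exact ite_Ico_mul_ite_Ico _ _ (ha.2.2 _ hrow) (hb.2.2 _ hrow)
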